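/- Let G be a group, ε : G → {±1} a group homomorphism, and D : G → ℤ² a function satisfying the cocycle condition D(gf) = D(f) + ε(f)·D(g) (where ±1 acts on ℤ² by scalar multiplication). Let A, B ⊆ G be subsets such that for all f ∈ A, D(f) = (-1 + ε(f), 0), and for all f ∈ B, D(f) = (0, -1 + ε(f)). Then for every element f of the subgroup generated by A ∪ B, D(f) = (2k, -2k) for some integer k if ε(f) = 1, and D(f) = (2k-2, -2k) for some integer k if ε(f) = -1. In particular the reduction of D(f) modulo 2 is (0,0) ∈ (ℤ/2ℤ)². -/

import Mathlib

/-!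
Subtracting the coboundary `f ↦ (ε f - 1) • (1, 0)` from `D` leaves a cocycle `E` that vanishes
on `A` and takes the values `0` or `(2, -2)` on `B`. For any cocycle, the elements on which it
takes values in a fixed additive subgroup form a subgroup, so `E` maps the closure of `A ∪ B`
into `ℤ • (2, -2)`, i.e. `D f = (2k + ε f - 1, -2k)`.
-/

def IsSignCocycle {G M : Type*} [Group G] [AddCommGroup M] (ε : G →* ℤˣ) (D : G → M) : Prop :=
  ∀ f g : G, D (g * f) = D f + (ε f : ℤ) • D g

namespace IsSignCocycle

variable {G M : Type*} [Group G] [AddCommGroup M] {ε : G →* ℤˣ} {D D' : G → M}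

theorem map_one (hD : IsSignCocycle ε D) : D 1 = 0 := by
  simpa using hD 1 1

theorem map_inv (hD : IsSignCocycle ε D) (f : G) : D f⁻¹ = -((ε f : ℤ) • D f) := by
  have h : (ε f : ℤ) • D f⁻¹ = -D f := by
    have := hD f f⁻¹
    rw [inv_mul_cancel, hD.map_one] at this
    exact eq_neg_of_add_eq_zero_right this.symm
  calc D f⁻¹ = (ε f : ℤ) • (ε f : ℤ) • D f⁻¹ := by
        rw [smul_smul, ← Units.val_mul, Int.units_mul_self, Units.val_one, one_smul]
    _ = -((ε f : ℤ) • D f) := by rw [h, smul_neg]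

theorem sub (hD : IsSignCocycle ε D) (hD' : IsSignCocycle ε D') : IsSignCocycle ε (D - D') := by
  intro f g
  simp only [Pi.sub_apply, hD f g, hD' f g, smul_sub]
  abel

theorem coboundary (ε : G →* ℤˣ) (v : M) : IsSignCocycle ε (fun f => ((ε f : ℤ) - 1) • v) := by
  intro f g
  dsimp only
  rw [map_mul, Units.val_mul, smul_smul, ← add_smul]
  congr 1
  ring

def preimageSubgroup (hD : IsSignCocycle ε D) (N : AddSubgroup M) : Subgroup G where
  carrier := {f | D f ∈ N}
  one_mem' := by simp [hD.map_one]
  mul_mem' {x y} hx hy := by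
    simp only [Set.mem_ofPred_eq, hD y x] at *
    exact N.add_mem hy (N.zsmul_mem hx _)
  inv_mem' {x} hx := by
    simp only [Set.mem_ofPred_eq, hD.map_inv] at *
    exact N.neg_mem (N.zsmul_mem hx _)

theorem mem_of_mem_closure (hD : IsSignCocycle ε D) {N : AddSubgroup M} {S : Set G}
    (hS : ∀ f ∈ S, D f ∈ N) {f : G} (hf : f ∈ Subgroup.closure S) : D f ∈ N :=
  (Subgroup.closure_le (hD.preimageSubgroup N)).mpr hS hf

end IsSignCocycle

theorem Int.even_units_sub_one (u : ℤˣ) : Even ((u : ℤ) - 1) := by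
  rcases Int.units_eq_one_or u with rfl | rfl <;> decide

theorem IsSignCocycle.exists_eq_of_mem_closure {G : Type*} [Group G] {ε : G →* ℤˣ}
    {D : G → ℤ × ℤ} (hD : IsSignCocycle ε D) {A B : Set G}
    (hA : ∀ f ∈ A, D f = (-1 + (ε f : ℤ), 0)) (hB : ∀ f ∈ B, D f = (0, -1 + (ε f : ℤ)))
    {f : G} (hf : f ∈ Subgroup.closure (A ∪ B)) :
    ∃ k : ℤ, D f = (2 * k + ε f - 1, -(2 * k)) := by
  set E := D - fun f => ((ε f : ℤ) - 1) • ((1, 0) : ℤ × ℤ)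
  have hE : IsSignCocycle ε E := hD.sub (coboundary ε _)
  have hgen : ∀ f ∈ A ∪ B, E f ∈ AddSubgroup.zmultiples ((2, -2) : ℤ × ℤ) := by
    rintro f (hf | hf)
    · simp [E, hA f hf, neg_add_eq_sub]
    · rcases Int.units_eq_one_or (ε f) with h | h <;> simp [E, hB f hf, h]
  obtain ⟨k, hk⟩ := AddSubgroup.mem_zmultiples_iff.mp (hE.mem_of_mem_closure hgen hf)
  have hDf : D f = E f + ((ε f : ℤ) - 1) • ((1, 0) : ℤ × ℤ) := by simp [E]
  refine ⟨k, ?_⟩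
  rw [hDf, ← hk]
  ext <;> simp <;> ring

/-- Let `G` be a group, `ε : G → {±1}` a homomorphism and `D : G → ℤ²` a function
satisfying the cocycle condition `D(g·f) = D(f) + ε(f)·D(g)`.  If `A` and `B` are
subsets of `G` with `D(f) = (-1 + ε(f), 0)` for `f ∈ A` and `D(f) = (0, -1 + ε(f))`
for `f ∈ B`, then every element `f` of the subgroup generated by `A ∪ B` satisfies
`D(f) = (2k, -2k)` for some `k ∈ ℤ` when `ε(f) = 1`, and `D(f) = (2k - 2, -2k)` for
some `k ∈ ℤ` when `ε(f) = -1`; in particular `D(f) ≡ (0,0) mod 2`. -/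
theorem degree_on_subgroup_generated {G : Type*} [Group G]
    (ε : G →* ℤˣ) (D : G → ℤ × ℤ)
    (hD : ∀ f g : G, D (g * f) = D f + (ε f : ℤ) • D g)
    (A B : Set G)
    (hA : ∀ f ∈ A, D f = (-1 + (ε f : ℤ), 0))
    (hB : ∀ f ∈ B, D f = (0, -1 + (ε f : ℤ))) :
    ∀ f ∈ Subgroup.closure (A ∪ B),
      (ε f = 1 → ∃ k : ℤ, D f = (2 * k, -(2 * k))) ∧
      (ε f = -1 → ∃ k : ℤ, D f = (2 * k - 2, -(2 * k))) ∧
      (((D f).1 : ZMod 2), ((D f).2 : ZMod 2)) = ((0 : ZMod 2), (0 : ZMod 2)) := by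
  intro f hf
  obtain ⟨k, hk⟩ := IsSignCocycle.exists_eq_of_mem_closure hD hA hB hf
  refine ⟨fun h => ⟨k, by simp [hk, h]⟩, fun h => ⟨k, by simp [hk, h]; ring⟩, ?_⟩
  simp only [hk, Prod.mk.injEq, ZMod.intCast_eq_zero_iff_even]
  exact ⟨add_sub_assoc (2 * k) _ 1 ▸ (even_two_mul k).add (Int.even_units_sub_one _),
    (even_two_mul k).neg⟩
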